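/- arXiv:2510.07917 — 2 statements merged into one kernel-verified Lean document; each statement's English description precedes it below -/
import Mathlib

section
/- B̄A_Lip(ω^ω) implies B̄A_Lip(2^ω): if for all ℵ1-dense A, B ⊆ ℕ → ℕ there is a Lipschitz f : (ℕ → ℕ) → (ℕ → ℕ) injective on A with f '' A = B, then for all ℵ1-dense A, B ⊆ ℕ → Bool there is a sequence of Lipschitz functions fₙ : (ℕ → Bool) → (ℕ → Bool) (n : ℕ) such that B = ⋃ₙ fₙ '' A. -/
/-!
Code `2^ω` into `ω^ω` by parity: a point of `ω^ω` with finitely many entries `≥ 2` is `2 h + y`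
for a unique finitely supported `h : ℕ →₀ ℕ` and `y : ℕ → Bool`. For `ℵ₁`-dense `S ⊆ 2^ω` the
set of all `2 h + y` with `y ∈ S` is `ℵ₁`-dense in `ω^ω`. A Lipschitz surjection `f` from the
lift of `A` onto the lift of `B`, read modulo `2`, gives for each of the countably many `h` the
Lipschitz map `y ↦ f (2 h + y) mod 2`, and together these maps carry `A` onto `B`.
-/

/-- A set `S` in a topological space is `ℵ₁`-dense if its intersection with every nonempty
open set has cardinality `ℵ₁`. -/
def Aleph1Dense {Z : Type*} [TopologicalSpace Z] (S : Set Z) : Prop :=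
  ∀ U : Set Z, IsOpen U → U.Nonempty → Cardinal.mk ↥(S ∩ U) = Cardinal.aleph 1

/-- `f` is Lipschitz: if `x` and `y` agree below `n` then so do `f x` and `f y`. -/
def IsLip {X : ℕ → Type*} (f : (∀ n, X n) → (∀ n, X n)) : Prop :=
  ∀ x y : ∀ n, X n, ∀ n : ℕ, (∀ i < n, x i = y i) → ∀ i < n, f x i = f y i

open Cardinal PiNat

theorem IsLip.comp_coordinatewise {X Y : ℕ → Type*} {f : (∀ n, X n) → (∀ n, X n)}
    (hf : IsLip f) (φ : ∀ n, Y n → X n) (ψ : ∀ n, X n → Y n) :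
    IsLip fun y n => ψ n (f (fun i => φ i (y i)) n) :=
  fun _ _ n hxy i hi => congrArg (ψ i) (hf _ _ n (fun j hj => congrArg (φ j) (hxy j hj)) i hi)

def parity (x : ℕ → ℕ) : ℕ → Bool := fun n => decide (x n % 2 = 1)

def parityLift (h : ℕ →₀ ℕ) (y : ℕ → Bool) : ℕ → ℕ := fun n => 2 * h n + (y n).toNat

def parityLiftSet (S : Set (ℕ → Bool)) : Set (ℕ → ℕ) := ⋃ h, parityLift h '' S

theorem parityLift_mem_parityLiftSet (h : ℕ →₀ ℕ) {S : Set (ℕ → Bool)} {y : ℕ → Bool}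
    (hy : y ∈ S) : parityLift h y ∈ parityLiftSet S :=
  Set.mem_iUnion.2 ⟨h, y, hy, rfl⟩

theorem parity_parityLift (h : ℕ →₀ ℕ) (y : ℕ → Bool) : parity (parityLift h y) = y := by
  funext n
  cases hy : y n <;> simp [parity, parityLift, hy]

theorem parity_mem_of_mem_parityLiftSet {S : Set (ℕ → Bool)} {x : ℕ → ℕ}
    (hx : x ∈ parityLiftSet S) : parity x ∈ S := by
  obtain ⟨h, y, hy, rfl⟩ := Set.mem_iUnion.1 hx
  rwa [parity_parityLift]

theorem parityLift_injective (h : ℕ →₀ ℕ) : Function.Injective (parityLift h) :=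
  Function.LeftInverse.injective (g := parity) (parity_parityLift h)

theorem continuous_parityLift (h : ℕ →₀ ℕ) : Continuous (parityLift h) :=
  continuous_pi fun n =>
    (continuous_of_discreteTopology (f := fun b : Bool => 2 * h n + b.toNat)).comp
      (continuous_apply n)

theorem parityLift_mem_cylinder (u : ℕ → ℕ) (n : ℕ) :
    parityLift (Finsupp.indicator (Finset.range n) fun i _ => u i / 2) (parity u) ∈
      cylinder u n := by
  intro i hi
  rw [parityLift, Finsupp.indicator_of_mem (Finset.mem_range.2 hi)]
  rcases Nat.mod_two_eq_zero_or_one (u i) with h | h <;> simp [parity, h] <;> omega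

theorem exists_parityLift_mem {U : Set (ℕ → ℕ)} (hU : IsOpen U) (hne : U.Nonempty) :
    ∃ h y, parityLift h y ∈ U := by
  obtain ⟨u, hu⟩ := hne
  obtain ⟨_, ⟨x, n, rfl⟩, hux, hsub⟩ :=
    (isTopologicalBasis_cylinders fun _ => ℕ).exists_subset_of_mem_open hu hU
  rw [mem_cylinder_iff_eq] at hux
  exact ⟨_, _, hsub (hux ▸ parityLift_mem_cylinder u n)⟩

theorem mk_parityLiftSet_le {S : Set (ℕ → Bool)} {κ : Cardinal} (hκ : ℵ₀ ≤ κ) (hS : #S ≤ κ) :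
    #(parityLiftSet S) ≤ κ :=
  (mk_iUnion_le _).trans <|
    mul_le_of_le hκ (mk_le_aleph0.trans hκ) (ciSup_le' fun _ => mk_image_le.trans hS)

theorem aleph1Dense_parityLiftSet {S : Set (ℕ → Bool)} (hS : Aleph1Dense S) :
    Aleph1Dense (parityLiftSet S) := by
  intro U hU hne
  have hSmk : #S = ℵ_ 1 := by simpa using hS Set.univ isOpen_univ Set.univ_nonempty
  refine le_antisymm ((mk_le_mk_of_subset Set.inter_subset_left).trans
    (mk_parityLiftSet_le (aleph0_le_aleph 1) hSmk.le)) ?_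
  obtain ⟨h, y, hy⟩ := exists_parityLift_mem hU hne
  have hV := hS _ (hU.preimage (continuous_parityLift h)) ⟨y, hy⟩
  rw [← hV, ← mk_image_eq (parityLift_injective h)]
  refine mk_le_mk_of_subset ?_
  rintro _ ⟨z, ⟨hzS, hzU⟩, rfl⟩
  exact ⟨parityLift_mem_parityLiftSet h hzS, hzU⟩

/-- The strong Lipschitz Baumgartner axiom for `ω^ω` implies the strong Lipschitz
Baumgartner axiom for `2^ω`. -/
theorem stmt_10
    (hBA : ∀ A B : Set (ℕ → ℕ), Aleph1Dense A → Aleph1Dense B →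
      ∃ f : (ℕ → ℕ) → (ℕ → ℕ), IsLip f ∧ Set.InjOn f A ∧ f '' A = B) :
    ∀ A B : Set (ℕ → Bool), Aleph1Dense A → Aleph1Dense B →
      ∃ f : ℕ → (ℕ → Bool) → (ℕ → Bool), (∀ n, IsLip (f n)) ∧ B = ⋃ n, f n '' A := by
  intro A B hA hB
  obtain ⟨f, hf, -, hfAB⟩ := hBA _ _ (aleph1Dense_parityLiftSet hA) (aleph1Dense_parityLiftSet hB)
  obtain ⟨e, he⟩ := exists_surjective_nat (ℕ →₀ ℕ)
  refine ⟨fun n y => parity (f (parityLift (e n) y)), fun n =>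
    hf.comp_coordinatewise (fun i (b : Bool) => 2 * e n i + b.toNat) fun _ k => decide (k % 2 = 1),
    ?_⟩
  ext b
  simp only [Set.mem_iUnion, Set.mem_image]
  constructor
  · intro hb
    obtain ⟨_, hx, hfx⟩ : parityLift 0 b ∈ f '' parityLiftSet A :=
      hfAB ▸ parityLift_mem_parityLiftSet 0 hb
    obtain ⟨h, y, hy, rfl⟩ := Set.mem_iUnion.1 hx
    obtain ⟨n, rfl⟩ := he h
    exact ⟨n, y, hy, by rw [hfx, parity_parityLift]⟩
  · rintro ⟨n, y, hy, rfl⟩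
    exact parity_mem_of_mem_parityLiftSet <|
      hfAB ▸ Set.mem_image_of_mem f (parityLift_mem_parityLiftSet _ hy)
end

section
/- For every h : ℕ → ℕ: (1) BA_Lip(ω^ω) implies BA_Lip(Π n, Fin (h n)), i.e. if for all ℵ1-dense A, B ⊆ ℕ → ℕ there is a Lipschitz f injective on A with f '' A ⊆ B, then for all ℵ1-dense A, B ⊆ Π n, Fin (h n) there is a Lipschitz g : (Π n, Fin (h n)) → (Π n, Fin (h n)) injective on A with g '' A ⊆ B; and (2) B̄A_Lip(ω^ω) implies B̄A_Lip(Π n, Fin (h n)), i.e. if for all ℵ1-dense A, B ⊆ ℕ → ℕ there is a Lipschitz f injective on A with f '' A = B, then for all ℵ1-dense A, B ⊆ Π n, Fin (h n) there is a sequence of Lipschitz functions gₘ on Π n, Fin (h n) with B = ⋃ₘ gₘ '' A. -/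
/-!
Write `x : ℕ → ℕ` as `x n = z n + h n * q n` with `z n < h n`: the remainders `z` form a point of
`Π n, Fin (h n)`, the quotients `q` a point of Baire space, and the decomposition respects agreement
below `n`. An `ℵ₁`-dense `A ⊆ Π n, Fin (h n)` lifts to the `ℵ₁`-dense set of sequences with
remainders in `A` and quotients in a fixed countable dense set `{d k}`. A Lipschitz map between
lifts, precomposed with `z ↦ (z, d m)` and followed by taking remainders, is Lipschitz on
`Π n, Fin (h n)`, and the countably many choices of `m` together reach all of `B`. For injectivity,
`B` is lifted differently, so that taking remainders is injective on the lift: pairwise disjoint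
`ℵ₁`-sized subsets of the traces of `B` on the countably many cylinders are each given the quotients
of their cylinder.
-/

open Cardinal Set PiNat Function

universe u

theorem exists_injective_forall_mem_of_mk_Iio_lt {W α : Type u} [LinearOrder W]
    [WellFoundedLT W] (X : W → Set α) (hX : ∀ a, #(Iio a) < #(X a)) :
    ∃ F : W → α, Injective F ∧ ∀ a, F a ∈ X a := by
  have fresh : ∀ a (s : Set α), #s ≤ #(Iio a) → ∃ y ∈ X a, y ∉ s := by
    intro a s hs
    by_contra! hsub
    exact (hX a).not_ge ((mk_le_mk_of_subset hsub).trans hs)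
  let F : W → α := wellFounded_lt.fix fun a F' =>
    (fresh a (range fun b : Iio a => F' b b.2) mk_range_le).choose
  have hF : ∀ a, F a ∈ X a ∧ ∀ b < a, F b ≠ F a := by
    intro a
    have hspec := (fresh a (range fun b : Iio a => F b) mk_range_le).choose_spec
    rw [← show F a = _ from wellFounded_lt.fix_eq _ a] at hspec
    exact ⟨hspec.1, fun b hb hba => hspec.2 ⟨⟨b, hb⟩, hba⟩⟩
  refine ⟨F, fun a b hab => by_contra fun hne => ?_, fun a => (hF a).1⟩
  rcases lt_or_gt_of_ne hne with hlt | hlt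
  exacts [(hF b).2 a hlt hab, (hF a).2 b hlt hab.symm]

/-- A greedy choice along a well-order of `P` of minimal order type. -/
theorem exists_injective_forall_mem_of_mk_le {P α : Type u} (X : P → Set α)
    (hX : ∀ p, #P ≤ #(X p)) : ∃ F : P → α, Injective F ∧ ∀ p, F p ∈ X p := by
  obtain ⟨e⟩ : Nonempty (P ≃ (#P).ord.ToType) := Cardinal.eq.mp (mk_ord_toType _).symm
  obtain ⟨F, hFinj, hFmem⟩ := exists_injective_forall_mem_of_mk_Iio_lt (X ∘ e.symm) fun a =>
    (by simpa using mk_Iio_lt a (by simp) : #(Iio a) < #P).trans_le (hX _)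
  exact ⟨F ∘ e, hFinj.comp e.injective, fun p => by simpa using hFmem (e p)⟩

theorem exists_pairwise_disjoint_subset_mk_eq {ι α : Type u} {κ : Cardinal.{u}} (hκ : ℵ₀ ≤ κ)
    (hι : #ι ≤ κ) (X : ι → Set α) (hX : ∀ i, κ ≤ #(X i)) :
    ∃ T : ι → Set α, (∀ i, T i ⊆ X i) ∧ Pairwise (Disjoint on T) ∧ ∀ i, #(T i) = κ := by
  have hP : #(κ.ord.ToType × ι) ≤ κ := by
    rw [mk_prod, lift_id, lift_id, mk_ord_toType]
    exact (mul_le_max_of_aleph0_le_left hκ).trans (max_le le_rfl hι)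
  obtain ⟨F, hFinj, hFmem⟩ :=
    exists_injective_forall_mem_of_mk_le (fun p : κ.ord.ToType × ι => X p.2)
      fun p => hP.trans (hX p.2)
  refine ⟨fun i => range fun w => F (w, i), ?_, ?_, ?_⟩
  · rintro i _ ⟨w, rfl⟩
    exact hFmem (w, i)
  · intro i j hij
    refine disjoint_left.mpr ?_
    rintro _ ⟨w, rfl⟩ ⟨w', hw'⟩
    exact hij (congrArg Prod.snd (hFinj hw')).symm
  · intro i
    rw [mk_range_eq _ fun w w' hww' => congrArg Prod.fst (hFinj hww'), mk_ord_toType]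

section Cylinders

variable {E : ℕ → Type*} [∀ n, TopologicalSpace (E n)] [∀ n, DiscreteTopology (E n)]

theorem Aleph1Dense.mk_inter_cylinder {S : Set (∀ n, E n)} (hS : Aleph1Dense S)
    (x : ∀ n, E n) (n : ℕ) : #(S ∩ cylinder x n : Set _) = ℵ₁ :=
  hS _ (isOpen_cylinder E x n) ⟨x, self_mem_cylinder x n⟩

theorem Aleph1Dense.mk_eq {Z : Type*} [TopologicalSpace Z] [Nonempty Z] {S : Set Z}
    (hS : Aleph1Dense S) : #S = ℵ₁ := by
  simpa using hS univ isOpen_univ univ_nonempty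

theorem aleph1Dense_of_forall_cylinder {S : Set (∀ n, E n)} (hS : #S ≤ ℵ₁)
    (hcyl : ∀ x n, ℵ₁ ≤ #(S ∩ cylinder x n : Set _)) : Aleph1Dense S := by
  rintro U hU ⟨x, hxU⟩
  obtain ⟨_, ⟨y, n, rfl⟩, hxy, hsub⟩ :=
    (isTopologicalBasis_cylinders E).exists_subset_of_mem_open hxU hU
  rw [← mem_cylinder_iff_eq.mp hxy] at hsub
  exact le_antisymm ((mk_le_mk_of_subset inter_subset_left).trans hS)
    ((hcyl x n).trans (mk_le_mk_of_subset (inter_subset_inter_right S hsub)))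

end Cylinders

section Decomposition

variable {h : ℕ → ℕ} (hp : ∀ n, 0 < h n)

def modPi (x : ℕ → ℕ) : ∀ n, Fin (h n) := fun n => ⟨x n % h n, Nat.mod_lt _ (hp n)⟩

def divPi (h : ℕ → ℕ) (x : ℕ → ℕ) : ℕ → ℕ := fun n => x n / h n

def mkMod (z : ∀ n, Fin (h n)) (q : ℕ → ℕ) : ℕ → ℕ := fun n => z n + h n * q n

@[simp]
theorem modPi_mkMod (z : ∀ n, Fin (h n)) (q : ℕ → ℕ) : modPi hp (mkMod z q) = z := by
  funext n
  ext
  simp [modPi, mkMod, Nat.mod_eq_of_lt (z n).isLt]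

theorem mkMod_left_injective (q : ℕ → ℕ) : Injective fun z : ∀ n, Fin (h n) => mkMod z q :=
  fun _ _ hzz' => funext fun n => Fin.ext (Nat.add_right_cancel (congrFun hzz' n))

theorem mkMod_mem_cylinder {z : ∀ n, Fin (h n)} {q x : ℕ → ℕ} {n : ℕ}
    (hz : z ∈ cylinder (modPi hp x) n) (hq : q ∈ cylinder (divPi h x) n) :
    mkMod z q ∈ cylinder x n := fun i hi => by
  simp only [mkMod, hz i hi, hq i hi, modPi, divPi, Nat.mod_add_div]

theorem modPi_mem_cylinder {x y : ℕ → ℕ} {n : ℕ} (hy : y ∈ cylinder x n) :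
    modPi hp y ∈ cylinder (modPi hp x) n := fun i hi => by
  simp [modPi, hy i hi]

theorem divPi_mem_cylinder {x y : ℕ → ℕ} {n : ℕ} (hy : y ∈ cylinder x n) :
    divPi h y ∈ cylinder (divPi h x) n := fun i hi => by
  simp [divPi, hy i hi]

theorem IsLip.modPi_comp_mkMod {f : (ℕ → ℕ) → ℕ → ℕ} (hf : IsLip f) (q : ℕ → ℕ) :
    IsLip fun z : ∀ n, Fin (h n) => modPi hp (f (mkMod z q)) := by
  intro x y n hxy i hi
  have hfxy := hf (mkMod x q) (mkMod y q) n (fun j hj => by simp [mkMod, hxy j hj]) i hi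
  simp [modPi, hfxy]

theorem aleph1Dense_iUnion_image_mkMod {ι : Type} [Countable ι] (T : ι → Set (∀ n, Fin (h n)))
    (q : ι → ℕ → ℕ) (hT : ∀ k, #(T k) ≤ ℵ₁)
    (hcyl : ∀ x n, ∃ k, q k ∈ cylinder (divPi h x) n ∧
      ℵ₁ ≤ #(T k ∩ cylinder (modPi hp x) n : Set _)) :
    Aleph1Dense (⋃ k, (mkMod · (q k)) '' T k) := by
  refine aleph1Dense_of_forall_cylinder ?_ fun x n => ?_
  · calc #(⋃ k, (mkMod · (q k)) '' T k) ≤ #ι * ⨆ k, #((mkMod · (q k)) '' T k) := mk_iUnion_le _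
      _ ≤ ℵ₀ * ℵ₁ := mul_le_mul' mk_le_aleph0 (ciSup_le' fun k => mk_image_le.trans (hT k))
      _ = ℵ₁ := aleph0_mul_eq aleph0_lt_aleph_one.le
  · obtain ⟨k, hqk, hTk⟩ := hcyl x n
    calc ℵ₁ ≤ #(T k ∩ cylinder (modPi hp x) n : Set _) := hTk
      _ = #((mkMod · (q k)) '' (T k ∩ cylinder (modPi hp x) n)) :=
        (mk_image_eq (mkMod_left_injective (q k))).symm
      _ ≤ _ := mk_le_mk_of_subset <| by
        rintro _ ⟨z, ⟨hzT, hz⟩, rfl⟩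
        exact ⟨mem_iUnion_of_mem k ⟨z, hzT, rfl⟩, mkMod_mem_cylinder hp hz hqk⟩

def liftMod (A : Set (∀ n, Fin (h n))) : Set (ℕ → ℕ) :=
  ⋃ k, (mkMod · (TopologicalSpace.denseSeq (ℕ → ℕ) k)) '' A

theorem mkMod_mem_liftMod {A : Set (∀ n, Fin (h n))} {a : ∀ n, Fin (h n)} (ha : a ∈ A) (k : ℕ) :
    mkMod a (TopologicalSpace.denseSeq (ℕ → ℕ) k) ∈ liftMod A :=
  mem_iUnion_of_mem k ⟨a, ha, rfl⟩

theorem modPi_mem_of_mem_liftMod {A : Set (∀ n, Fin (h n))} {x : ℕ → ℕ} (hx : x ∈ liftMod A) :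
    modPi hp x ∈ A := by
  obtain ⟨k, a, ha, rfl⟩ := mem_iUnion.mp hx
  simpa using ha

include hp in
theorem aleph1Dense_liftMod {A : Set (∀ n, Fin (h n))} (hA : Aleph1Dense A) :
    Aleph1Dense (liftMod A) := by
  have : Nonempty (∀ n, Fin (h n)) := ⟨fun n => ⟨0, hp n⟩⟩
  refine aleph1Dense_iUnion_image_mkMod hp _ _ (fun _ => hA.mk_eq.le) fun x n => ?_
  obtain ⟨k, hk⟩ := (TopologicalSpace.denseRange_denseSeq (ℕ → ℕ)).exists_mem_open
    (isOpen_cylinder _ (divPi h x) n) ⟨_, self_mem_cylinder _ n⟩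
  exact ⟨k, hk, (hA.mk_inter_cylinder _ n).ge⟩

theorem exists_aleph1Dense_injOn_modPi {B : Set (∀ n, Fin (h n))} (hB : Aleph1Dense B) :
    ∃ B' : Set (ℕ → ℕ), Aleph1Dense B' ∧ InjOn (modPi hp) B' ∧ MapsTo (modPi hp) B' B := by
  set d := TopologicalSpace.denseSeq (ℕ → ℕ)
  obtain ⟨T, hTB, hTdisj, hTmk⟩ := exists_pairwise_disjoint_subset_mk_eq aleph0_lt_aleph_one.le
    (mk_le_aleph0.trans aleph0_lt_aleph_one.le)
    (fun p : ℕ × ℕ => B ∩ cylinder (modPi hp (d p.1)) p.2)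
    fun p => (hB.mk_inter_cylinder _ _).ge
  refine ⟨⋃ p, (mkMod · (divPi h (d p.1))) '' T p, ?_, ?_, ?_⟩
  · refine aleph1Dense_iUnion_image_mkMod hp _ _ (fun p => (hTmk p).le) fun x n => ?_
    obtain ⟨k, hk⟩ := (TopologicalSpace.denseRange_denseSeq (ℕ → ℕ)).exists_mem_open
      (isOpen_cylinder _ x n) ⟨_, self_mem_cylinder x n⟩
    refine ⟨(k, n), divPi_mem_cylinder hk, ?_⟩
    rw [inter_eq_left.mpr, hTmk]
    rw [← mem_cylinder_iff_eq.mp (modPi_mem_cylinder hp hk)]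
    exact fun z hz => (hTB _ hz).2
  · rintro _ hx _ hy hxy
    obtain ⟨p, z, hz, rfl⟩ := mem_iUnion.mp hx
    obtain ⟨p', z', hz', rfl⟩ := mem_iUnion.mp hy
    simp only [modPi_mkMod] at hxy
    subst hxy
    obtain rfl : p = p' := by_contra fun hne => disjoint_left.mp (hTdisj hne) hz hz'
    rfl
  · rintro _ hx
    obtain ⟨p, z, hz, rfl⟩ := mem_iUnion.mp hx
    simpa using (hTB p hz).1

end Decomposition

theorem exists_isLip_injOn_image_subset_of_baire {h : ℕ → ℕ} (hp : ∀ n, 0 < h n)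
    (H : ∀ A B : Set (ℕ → ℕ), Aleph1Dense A → Aleph1Dense B →
      ∃ f : (ℕ → ℕ) → (ℕ → ℕ), IsLip f ∧ InjOn f A ∧ f '' A ⊆ B)
    {A B : Set (∀ n, Fin (h n))} (hA : Aleph1Dense A) (hB : Aleph1Dense B) :
    ∃ g : (∀ n, Fin (h n)) → (∀ n, Fin (h n)), IsLip g ∧ InjOn g A ∧ g '' A ⊆ B := by
  obtain ⟨B', hB', hinj, hmaps⟩ := exists_aleph1Dense_injOn_modPi hp hB
  obtain ⟨f, hf, hfinj, hfA⟩ := H _ _ (aleph1Dense_liftMod hp hA) hB'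
  have hfB' {a} (ha : a ∈ A) : f (mkMod a (TopologicalSpace.denseSeq (ℕ → ℕ) 0)) ∈ B' :=
    hfA (mem_image_of_mem f (mkMod_mem_liftMod ha 0))
  refine ⟨_, hf.modPi_comp_mkMod hp (TopologicalSpace.denseSeq (ℕ → ℕ) 0),
    fun a ha a' ha' haa' => ?_, ?_⟩
  · exact mkMod_left_injective _
      (hfinj (mkMod_mem_liftMod ha 0) (mkMod_mem_liftMod ha' 0) (hinj (hfB' ha) (hfB' ha') haa'))
  · rintro _ ⟨a, ha, rfl⟩
    exact hmaps (hfB' ha)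

theorem exists_isLip_seq_iUnion_image_eq_of_baire {h : ℕ → ℕ} (hp : ∀ n, 0 < h n)
    (H : ∀ A B : Set (ℕ → ℕ), Aleph1Dense A → Aleph1Dense B →
      ∃ f : (ℕ → ℕ) → (ℕ → ℕ), IsLip f ∧ InjOn f A ∧ f '' A = B)
    {A B : Set (∀ n, Fin (h n))} (hA : Aleph1Dense A) (hB : Aleph1Dense B) :
    ∃ g : ℕ → (∀ n, Fin (h n)) → (∀ n, Fin (h n)), (∀ m, IsLip (g m)) ∧ B = ⋃ m, g m '' A := by
  obtain ⟨f, hf, -, hfA⟩ := H _ _ (aleph1Dense_liftMod hp hA) (aleph1Dense_liftMod hp hB)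
  refine ⟨fun m z => modPi hp (f (mkMod z (TopologicalSpace.denseSeq (ℕ → ℕ) m))),
    fun m => hf.modPi_comp_mkMod hp (TopologicalSpace.denseSeq (ℕ → ℕ) m), ?_⟩
  ext b
  simp only [mem_iUnion, mem_image]
  constructor
  · intro hb
    obtain ⟨x, hx, hfx⟩ := hfA ▸ mkMod_mem_liftMod hb 0
    obtain ⟨m, a, ha, rfl⟩ := mem_iUnion.mp hx
    exact ⟨m, a, ha, by simp [hfx]⟩
  · rintro ⟨m, a, ha, rfl⟩
    exact modPi_mem_of_mem_liftMod hp (hfA ▸ mem_image_of_mem f (mkMod_mem_liftMod ha m))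

/-- For every `h : ℕ → ℕ`: `BA_Lip(ω^ω)` implies `BA_Lip(Π n, Fin (h n))`, and
`B̄A_Lip(ω^ω)` implies `B̄A_Lip(Π n, Fin (h n))`. -/
theorem stmt_11 (h : ℕ → ℕ) :
    ((∀ A B : Set (ℕ → ℕ), Aleph1Dense A → Aleph1Dense B →
        ∃ f : (ℕ → ℕ) → (ℕ → ℕ), IsLip f ∧ Set.InjOn f A ∧ f '' A ⊆ B) →
      ∀ A B : Set (∀ n, Fin (h n)), Aleph1Dense A → Aleph1Dense B →
        ∃ g : (∀ n, Fin (h n)) → (∀ n, Fin (h n)), IsLip g ∧ Set.InjOn g A ∧ g '' A ⊆ B) ∧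
    ((∀ A B : Set (ℕ → ℕ), Aleph1Dense A → Aleph1Dense B →
        ∃ f : (ℕ → ℕ) → (ℕ → ℕ), IsLip f ∧ Set.InjOn f A ∧ f '' A = B) →
      ∀ A B : Set (∀ n, Fin (h n)), Aleph1Dense A → Aleph1Dense B →
        ∃ g : ℕ → (∀ n, Fin (h n)) → (∀ n, Fin (h n)),
          (∀ m, IsLip (g m)) ∧ B = ⋃ m, g m '' A) := by
  by_cases hp : ∀ n, 0 < h n
  · exact ⟨fun H _ _ hA hB => exists_isLip_injOn_image_subset_of_baire hp H hA hB,
      fun H _ _ hA hB => exists_isLip_seq_iUnion_image_eq_of_baire hp H hA hB⟩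
  · obtain ⟨n, hn⟩ := not_forall.mp hp
    have : IsEmpty (∀ n, Fin (h n)) := ⟨fun z => hn ((z n).pos)⟩
    exact ⟨fun _ _ _ _ _ => ⟨id, fun z => isEmptyElim z, fun z => isEmptyElim z,
        fun z => isEmptyElim z⟩,
      fun _ _ _ _ _ => ⟨fun _ => id, fun _ z => isEmptyElim z, Subsingleton.elim _ _⟩⟩
end
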